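/- For any 0 < δ < 1 and v ∈ C_c^∞(ℝⁿ), ∫_Ω |v|² ⟨x⟩^{-(1+δ)} dx ≤ 8 δ⁻¹ ‖v‖_Y², where ‖v‖_Y² := sup_{R>0} ⟨R⟩⁻¹ ∫_{Ω∩{|x|≤R}} |v|² dx. -/

import Mathlib

open MeasureTheory Metric ENNReal

noncomputable section

/-- Squared L² integral over the sphere slice `Ω ∩ {|x| = R}` w.r.t. the
surface (Hausdorff) measure. -/
def sphL2 {n : ℕ} (Ω : Set (EuclideanSpace ℝ (Fin n))) {F : Type*} [NormedAddCommGroup F]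
    (v : EuclideanSpace ℝ (Fin n) → F) (R : ℝ) : ℝ≥0∞ :=
  ∫⁻ x in Ω ∩ sphere (0 : EuclideanSpace ℝ (Fin n)) R, (‖v x‖₊ : ℝ≥0∞) ^ 2 ∂(μH[(n : ℝ) - 1])

/-- Squared L² integral over the ball slice `Ω ∩ {|x| ≤ R}` (Lebesgue measure). -/
def ballL2 {n : ℕ} (Ω : Set (EuclideanSpace ℝ (Fin n))) {F : Type*} [NormedAddCommGroup F]
    (v : EuclideanSpace ℝ (Fin n) → F) (R : ℝ) : ℝ≥0∞ :=
  ∫⁻ x in Ω ∩ closedBall (0 : EuclideanSpace ℝ (Fin n)) R, (‖v x‖₊ : ℝ≥0∞) ^ 2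

/-- Homogeneous trace norm squared `‖v‖_Ẋ²`. -/
def Xdot2 {n : ℕ} (Ω : Set (EuclideanSpace ℝ (Fin n))) {F : Type*} [NormedAddCommGroup F]
    (v : EuclideanSpace ℝ (Fin n) → F) : ℝ≥0∞ :=
  ⨆ (R : ℝ) (_ : 0 < R), (ENNReal.ofReal (R ^ 2))⁻¹ * sphL2 Ω v R

/-- Nonhomogeneous trace norm squared `‖v‖_X²`. -/
def Xnh2 {n : ℕ} (Ω : Set (EuclideanSpace ℝ (Fin n))) {F : Type*} [NormedAddCommGroup F]
    (v : EuclideanSpace ℝ (Fin n) → F) : ℝ≥0∞ :=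
  ⨆ (R : ℝ) (_ : 0 < R), (ENNReal.ofReal (1 + R ^ 2))⁻¹ * sphL2 Ω v R

/-- Homogeneous Morrey–Campanato norm squared `‖v‖_Ẏ²`. -/
def Ydot2 {n : ℕ} (Ω : Set (EuclideanSpace ℝ (Fin n))) {F : Type*} [NormedAddCommGroup F]
    (v : EuclideanSpace ℝ (Fin n) → F) : ℝ≥0∞ :=
  ⨆ (R : ℝ) (_ : 0 < R), (ENNReal.ofReal R)⁻¹ * ballL2 Ω v R

/-- Nonhomogeneous Morrey–Campanato norm squared `‖v‖_Y²`. -/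
def Ynh2 {n : ℕ} (Ω : Set (EuclideanSpace ℝ (Fin n))) {F : Type*} [NormedAddCommGroup F]
    (v : EuclideanSpace ℝ (Fin n) → F) : ℝ≥0∞ :=
  ⨆ (R : ℝ) (_ : 0 < R), (ENNReal.ofReal (Real.sqrt (1 + R ^ 2)))⁻¹ * ballL2 Ω v R



/-- key real inequality per annulus -/
lemma annulus_key (δ : ℝ) (hδ0 : 0 < δ) (k : ℕ) :
    ((1 + ((2:ℝ)^k)^2) ^ ((1+δ)/2))⁻¹ * Real.sqrt (1 + ((2:ℝ)^(k+1))^2)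
      ≤ 2 * ((2:ℝ) ^ (-δ))^k := by
  set u : ℝ := 2^k with hu
  have hu0 : (0:ℝ) < u := by positivity
  have ha : (0:ℝ) < 1 + u^2 := by positivity
  have h1 : Real.sqrt (1 + ((2:ℝ)^(k+1))^2) ≤ 2 * Real.sqrt (1 + u^2) := by
    have h2 : (1 : ℝ) + ((2:ℝ)^(k+1))^2 ≤ 4 * (1 + u^2) := by
      have : ((2:ℝ)^(k+1))^2 = 4 * u^2 := by rw [pow_succ]; ring
      nlinarith
    calc Real.sqrt (1 + ((2:ℝ)^(k+1))^2) ≤ Real.sqrt (4 * (1+u^2)) :=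
          Real.sqrt_le_sqrt h2
      _ = 2 * Real.sqrt (1+u^2) := by
          rw [Real.sqrt_mul (by norm_num), show (4:ℝ) = 2^2 by norm_num,
            Real.sqrt_sq (by norm_num)]
  have h3 : ((1 + u^2) ^ ((1+δ)/2))⁻¹ * (2 * Real.sqrt (1+u^2))
      = 2 * (1 + u^2) ^ (-(δ/2)) := by
    rw [Real.sqrt_eq_rpow, ← Real.rpow_neg ha.le, mul_comm, mul_assoc,
      ← Real.rpow_add ha]
    ring_nf
  have h4 : (1 + u^2) ^ (-(δ/2)) ≤ (u^2) ^ (-(δ/2)) :=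
    Real.rpow_le_rpow_of_nonpos (by positivity) (by nlinarith) (by linarith)
  have h5 : (u^2 : ℝ) ^ (-(δ/2)) = ((2:ℝ) ^ (-δ))^k := by
    rw [← Real.rpow_natCast u 2, ← Real.rpow_mul hu0.le]
    rw [hu, ← Real.rpow_natCast (2:ℝ) k, ← Real.rpow_mul (by norm_num),
      ← Real.rpow_natCast ((2:ℝ) ^ (-δ)) k, ← Real.rpow_mul (by norm_num)]
    norm_num
    ring_nf
  calc ((1 + u^2) ^ ((1+δ)/2))⁻¹ * Real.sqrt (1 + ((2:ℝ)^(k+1))^2)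
      ≤ ((1 + u^2) ^ ((1+δ)/2))⁻¹ * (2 * Real.sqrt (1+u^2)) := by
        have : (0:ℝ) ≤ ((1 + u^2) ^ ((1+δ)/2))⁻¹ := by positivity
        exact mul_le_mul_of_nonneg_left h1 this
    _ = 2 * (1 + u^2) ^ (-(δ/2)) := h3
    _ ≤ 2 * (u^2) ^ (-(δ/2)) := by linarith
    _ = 2 * ((2:ℝ)^(-δ))^k := by rw [h5]

lemma const_key (δ : ℝ) (hδ0 : 0 < δ) (hδ1 : δ < 1) :
    Real.sqrt 2 + 2 * (1 - (2:ℝ) ^ (-δ))⁻¹ ≤ 8 / δ := by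
  have hL1 : (0.6931471803 : ℝ) < Real.log 2 := Real.log_two_gt_d9
  have hL2 : Real.log 2 < 0.6931471808 := Real.log_two_lt_d9
  set L := Real.log 2 with hLdef
  set t := δ * L with htdef
  have ht0 : 0 < t := by positivity
  have ht1 : t < 1 := by nlinarith
  have hexp : (2:ℝ) ^ (-δ) = Real.exp (-t) := by
    rw [Real.rpow_def_of_pos (by norm_num), htdef]; ring_nf; exact congrArg Real.exp (by rw [hLdef]; ring)
  have h1 : Real.exp (-t) ≤ (1 + t)⁻¹ := by
    rw [Real.exp_neg]
    have := Real.add_one_le_exp t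
    have hexppos := Real.exp_pos t
    rw [inv_le_inv₀ hexppos (by linarith)]
    linarith
  have h2 : (1 + t)⁻¹ ≤ 1 - t/2 := by
    rw [inv_le_iff_one_le_mul₀ (by linarith)]
    nlinarith
  have h3 : (2:ℝ) ^ (-δ) ≤ 1 - t/2 := by rw [hexp]; linarith
  have hs0 : (0:ℝ) < t/2 := by linarith
  have hs : t/2 ≤ 1 - (2:ℝ)^(-δ) := by linarith
  have h4 : (1 - (2:ℝ)^(-δ))⁻¹ ≤ (t/2)⁻¹ := by
    apply inv_anti₀ hs0 hs
  have hsqrt : Real.sqrt 2 ≤ 1.5 := by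
    have h := Real.sq_sqrt (by norm_num : (0:ℝ) ≤ 2)
    nlinarith [Real.sqrt_nonneg 2]
  have h5 : 2 * (t/2)⁻¹ = 4 / t := by field_simp; norm_num
  rw [le_div_iff₀ hδ0]
  have h6 : (4 / t) * δ = 4 / L := by rw [htdef]; field_simp
  have h7 : 4 / L ≤ 4 / 0.6931471803 := by gcongr
  nlinarith [mul_le_mul_of_nonneg_right h4 hδ0.le,
    mul_le_mul_of_nonneg_right hsqrt hδ0.le]


def annuli (n : ℕ) : ℕ → Set (EuclideanSpace ℝ (Fin n))
  | 0 => closedBall 0 1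
  | (j+1) => closedBall 0 ((2:ℝ)^(j+1)) \ closedBall 0 ((2:ℝ)^j)

lemma annuli_zero (n : ℕ) : annuli n 0 = closedBall 0 1 := rfl
lemma annuli_succ (n : ℕ) (j : ℕ) :
    annuli n (j+1) = closedBall (0 : EuclideanSpace ℝ (Fin n)) ((2:ℝ)^(j+1)) \ closedBall 0 ((2:ℝ)^j) := rfl

set_option maxHeartbeats 1000000 in
/-- weighted estimate with weight `⟨x⟩^{-(1+δ)}`. -/
theorem stmt3 (n : ℕ) (Ω : Set (EuclideanSpace ℝ (Fin n))) (hΩ : IsOpen Ω)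
    (δ : ℝ) (hδ0 : 0 < δ) (hδ1 : δ < 1)
    (v : EuclideanSpace ℝ (Fin n) → ℂ) (hv : ContDiff ℝ (⊤ : ℕ∞) v) (hc : HasCompactSupport v) :
    (∫⁻ x in Ω, (‖v x‖₊ : ℝ≥0∞) ^ 2 *
        ENNReal.ofReal ((1 + ‖x‖ ^ 2) ^ ((1 + δ) / 2))⁻¹)
      ≤ ENNReal.ofReal (8 / δ) * Ynh2 Ω v := by
  classical
  set M := Ynh2 Ω v with hM
  set f : EuclideanSpace ℝ (Fin n) → ℝ≥0∞ := fun x => (‖v x‖₊ : ℝ≥0∞) ^ 2 *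
      ENNReal.ofReal ((1 + ‖x‖ ^ 2) ^ ((1 + δ) / 2))⁻¹ with hf
  have hball : ∀ R : ℝ, 0 < R →
      ballL2 Ω v R ≤ ENNReal.ofReal (Real.sqrt (1 + R^2)) * M := by
    intro R hR
    have hs : 0 < Real.sqrt (1 + R^2) := Real.sqrt_pos.2 (by positivity)
    have h1 : (ENNReal.ofReal (Real.sqrt (1+R^2)))⁻¹ * ballL2 Ω v R ≤ M :=
      le_iSup₂ (f := fun (R:ℝ) (_ : 0 < R) =>
        (ENNReal.ofReal (Real.sqrt (1 + R^2)))⁻¹ * ballL2 Ω v R) R hR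
    calc ballL2 Ω v R
        = ENNReal.ofReal (Real.sqrt (1+R^2)) *
            ((ENNReal.ofReal (Real.sqrt (1+R^2)))⁻¹ * ballL2 Ω v R) := by
          rw [← mul_assoc, ENNReal.mul_inv_cancel (ENNReal.ofReal_pos.2 hs).ne'
            ofReal_ne_top, one_mul]
      _ ≤ ENNReal.ofReal (Real.sqrt (1+R^2)) * M := mul_le_mul_right h1 _
  have hcover : ∀ x : EuclideanSpace ℝ (Fin n), ∃ k, x ∈ annuli n k := by
    intro x
    have hex : ∃ m : ℕ, ‖x‖ ≤ (2:ℝ) ^ m := by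
      obtain ⟨m, hm⟩ := pow_unbounded_of_one_lt (‖x‖) (by norm_num : (1:ℝ) < 2)
      exact ⟨m, hm.le⟩
    have hspec : ‖x‖ ≤ (2:ℝ) ^ (Nat.find hex) := Nat.find_spec hex
    match hm : Nat.find hex with
    | 0 =>
      refine ⟨0, ?_⟩
      rw [hm] at hspec
      rw [annuli_zero, mem_closedBall_zero_iff]
      simpa using hspec
    | (j+1) =>
      refine ⟨j+1, ?_⟩
      have hmin : ¬ (‖x‖ ≤ (2:ℝ) ^ j) := by
        have := Nat.find_min hex (m := j) (by omega)
        simpa using this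
      rw [hm] at hspec
      rw [annuli_succ, Set.mem_diff, mem_closedBall_zero_iff, mem_closedBall_zero_iff]
      exact ⟨hspec, hmin⟩
  have hΩsub : Ω ⊆ ⋃ k, Ω ∩ annuli n k := by
    intro x hx
    obtain ⟨k, hk⟩ := hcover x
    exact Set.mem_iUnion.2 ⟨k, hx, hk⟩
  have hterm0 : (∫⁻ x in Ω ∩ annuli n 0, f x) ≤ ENNReal.ofReal (Real.sqrt 2) * M := by
    have hptw : ∀ x : EuclideanSpace ℝ (Fin n), f x ≤ (‖v x‖₊ : ℝ≥0∞) ^ 2 := by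
      intro x
      have h1 : (1:ℝ) ≤ (1 + ‖x‖ ^ 2) ^ ((1 + δ) / 2) :=
        Real.one_le_rpow (by nlinarith [sq_nonneg ‖x‖]) (by linarith)
      have h2 : ((1 + ‖x‖ ^ 2) ^ ((1 + δ) / 2))⁻¹ ≤ 1 := by
        rw [inv_le_one_iff₀]; right; exact h1
      calc f x ≤ (‖v x‖₊ : ℝ≥0∞) ^ 2 * 1 :=
            mul_le_mul_right (by simpa using ENNReal.ofReal_le_ofReal h2) _
        _ = (‖v x‖₊ : ℝ≥0∞) ^ 2 := mul_one _
    calc (∫⁻ x in Ω ∩ annuli n 0, f x)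
        ≤ ∫⁻ x in Ω ∩ closedBall (0 : EuclideanSpace ℝ (Fin n)) 1, (‖v x‖₊ : ℝ≥0∞) ^ 2 := by
          rw [annuli_zero]; exact lintegral_mono (fun x => hptw x)
      _ = ballL2 Ω v 1 := rfl
      _ ≤ ENNReal.ofReal (Real.sqrt (1+1^2)) * M := hball 1 one_pos
      _ = ENNReal.ofReal (Real.sqrt 2) * M := by norm_num
  have hterm : ∀ k : ℕ, (∫⁻ x in Ω ∩ annuli n (k+1), f x)
      ≤ ENNReal.ofReal (2 * ((2:ℝ)^(-δ))^k) * M := by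
    intro k
    set c : ℝ := ((1 + ((2:ℝ)^k)^2) ^ ((1+δ)/2))⁻¹ with hc
    have hmeas : MeasurableSet (Ω ∩ annuli n (k+1)) := by
      rw [annuli_succ]
      exact (hΩ.measurableSet).inter
        ((measurableSet_closedBall).diff measurableSet_closedBall)
    have hptw : ∀ x ∈ Ω ∩ annuli n (k+1), f x ≤ ENNReal.ofReal c * (‖v x‖₊ : ℝ≥0∞) ^ 2 := by
      intro x hx
      have hx2 := hx.2
      rw [annuli_succ, Set.mem_diff, mem_closedBall_zero_iff, mem_closedBall_zero_iff] at hx2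
      have hxmem : (2:ℝ)^k < ‖x‖ := not_le.mp hx2.2
      have hbase : 1 + ((2:ℝ)^k)^2 ≤ 1 + ‖x‖ ^ 2 := by
        nlinarith [pow_pos (by norm_num : (0:ℝ)<2) k]
      have h1 : (1 + ((2:ℝ)^k)^2) ^ ((1+δ)/2) ≤ (1 + ‖x‖ ^ 2) ^ ((1 + δ) / 2) :=
        Real.rpow_le_rpow (by positivity) hbase (by linarith)
      have h2 : ((1 + ‖x‖ ^ 2) ^ ((1 + δ) / 2))⁻¹ ≤ c := by
        rw [hc]; exact inv_anti₀ (by positivity) h1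
      calc f x = ENNReal.ofReal ((1 + ‖x‖ ^ 2) ^ ((1 + δ) / 2))⁻¹ * (‖v x‖₊ : ℝ≥0∞) ^ 2 := by
            rw [hf]; exact mul_comm _ _
        _ ≤ ENNReal.ofReal c * (‖v x‖₊ : ℝ≥0∞) ^ 2 :=
            mul_le_mul_left (ENNReal.ofReal_le_ofReal h2) _
    have hsub : Ω ∩ annuli n (k+1) ⊆ Ω ∩ closedBall (0 : EuclideanSpace ℝ (Fin n)) ((2:ℝ)^(k+1)) := by
      rw [annuli_succ]
      exact Set.inter_subset_inter_right _ Set.diff_subset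
    calc (∫⁻ x in Ω ∩ annuli n (k+1), f x)
        ≤ ∫⁻ x in Ω ∩ annuli n (k+1), ENNReal.ofReal c * (‖v x‖₊ : ℝ≥0∞) ^ 2 :=
          setLIntegral_mono' hmeas hptw
      _ = ENNReal.ofReal c * ∫⁻ x in Ω ∩ annuli n (k+1), (‖v x‖₊ : ℝ≥0∞) ^ 2 :=
          lintegral_const_mul' _ _ ofReal_ne_top
      _ ≤ ENNReal.ofReal c * ballL2 Ω v ((2:ℝ)^(k+1)) :=
          mul_le_mul_right (lintegral_mono_set hsub) _
      _ ≤ ENNReal.ofReal c * (ENNReal.ofReal (Real.sqrt (1 + ((2:ℝ)^(k+1))^2)) * M) :=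
          mul_le_mul_right (hball _ (by positivity)) _
      _ = ENNReal.ofReal (c * Real.sqrt (1 + ((2:ℝ)^(k+1))^2)) * M := by
          rw [← mul_assoc, ← ENNReal.ofReal_mul (by positivity)]
      _ ≤ ENNReal.ofReal (2 * ((2:ℝ)^(-δ))^k) * M :=
          mul_le_mul_left (ENNReal.ofReal_le_ofReal (annulus_key δ hδ0 k)) _
  set r : ℝ≥0∞ := ENNReal.ofReal ((2:ℝ)^(-δ)) with hr
  have hsum : (∫⁻ x in Ω, f x)
      ≤ (ENNReal.ofReal (Real.sqrt 2) + ENNReal.ofReal 2 * (1 - r)⁻¹) * M := by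
    calc (∫⁻ x in Ω, f x) ≤ ∫⁻ x in ⋃ k, Ω ∩ annuli n k, f x :=
          lintegral_mono_set hΩsub
      _ ≤ ∑' k, ∫⁻ x in Ω ∩ annuli n k, f x := lintegral_iUnion_le _ _
      _ = (∫⁻ x in Ω ∩ annuli n 0, f x) + ∑' k, ∫⁻ x in Ω ∩ annuli n (k+1), f x :=
          tsum_eq_zero_add' ENNReal.summable
      _ ≤ ENNReal.ofReal (Real.sqrt 2) * M
          + ∑' k, ENNReal.ofReal (2 * ((2:ℝ)^(-δ))^k) * M :=
          add_le_add hterm0 (ENNReal.tsum_le_tsum hterm)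
      _ = ENNReal.ofReal (Real.sqrt 2) * M + (ENNReal.ofReal 2 * (1 - r)⁻¹) * M := by
          congr 1
          rw [ENNReal.tsum_mul_right]
          congr 1
          have heq : ∀ k : ℕ, ENNReal.ofReal (2 * ((2:ℝ)^(-δ))^k) = ENNReal.ofReal 2 * r ^ k := by
            intro k
            rw [ENNReal.ofReal_mul (by norm_num), hr, ← ENNReal.ofReal_pow (by positivity)]
          simp_rw [heq]
          rw [ENNReal.tsum_mul_left, ENNReal.tsum_geometric]
      _ = (ENNReal.ofReal (Real.sqrt 2) + ENNReal.ofReal 2 * (1 - r)⁻¹) * M := by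
          rw [add_mul]
  refine hsum.trans (mul_le_mul_left ?_ M)
  have hrlt : (2:ℝ)^(-δ) < 1 :=
    Real.rpow_lt_one_of_one_lt_of_neg (by norm_num) (by linarith)
  have hrnn : (0:ℝ) ≤ (2:ℝ)^(-δ) := by positivity
  have h1r : (1 : ℝ≥0∞) - r = ENNReal.ofReal (1 - (2:ℝ)^(-δ)) := by
    rw [hr, ENNReal.ofReal_sub _ hrnn, ENNReal.ofReal_one]
  have hinv : (1 - r)⁻¹ = ENNReal.ofReal ((1 - (2:ℝ)^(-δ))⁻¹) := by
    rw [h1r, ← ENNReal.ofReal_inv_of_pos (by linarith)]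
  rw [hinv, ← ENNReal.ofReal_mul (by norm_num), ← ENNReal.ofReal_add
    (Real.sqrt_nonneg 2) (mul_nonneg (by norm_num) (inv_nonneg.2 (by linarith)))]
  exact ENNReal.ofReal_le_ofReal (const_key δ hδ0 hδ1)

end
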